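/- For all t > 0: (ω_d/2) ≤ ∫_{ℝ^d} ρ_t(x) dx ≤ (ω_d/2)(1 + 2/d), where ω_d is the surface measure of the unit sphere in ℝ^d. -/

import Mathlib

open MeasureTheory ENNReal Filter Set

open Metric Measure

noncomputable def hfun (d : ℕ) (ν : ℝ → ℝ≥0∞) (r : ℝ) : ℝ≥0∞ :=
  ∫⁻ x : EuclideanSpace ℝ (Fin d), min 1 (ENNReal.ofReal (‖x‖ ^ 2 / r ^ 2)) * ν ‖x‖

noncomputable def Kfun (d : ℕ) (ν : ℝ → ℝ≥0∞) (r : ℝ) : ℝ≥0∞ :=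
  (ENNReal.ofReal (r ^ 2))⁻¹ *
    ∫⁻ x in {x : EuclideanSpace ℝ (Fin d) | ‖x‖ < r}, ENNReal.ofReal (‖x‖ ^ 2) * ν ‖x‖

noncomputable def rho (d : ℕ) (ν : ℝ → ℝ≥0∞) (hinv : ℝ → ℝ) (t : ℝ)
    (x : EuclideanSpace ℝ (Fin d)) : ℝ≥0∞ :=
  min (ENNReal.ofReal (((hinv (1 / t)) ^ d)⁻¹))
    (ENNReal.ofReal t * Kfun d ν ‖x‖ / ENNReal.ofReal (‖x‖ ^ d))

noncomputable def omegaD (d : ℕ) : ℝ :=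
  2 * Real.pi ^ ((d : ℝ) / 2) / Real.Gamma ((d : ℝ) / 2)

open Module in

lemma lintegral_norm_addHaar {E : Type*} [NormedAddCommGroup E] [NormedSpace ℝ E]
    [MeasurableSpace E] [BorelSpace E] [FiniteDimensional ℝ E] [Nontrivial E]
    (μ : Measure E) [μ.IsAddHaarMeasure] (f : ℝ → ℝ≥0∞) (hf : Measurable f) :
    ∫⁻ x, f ‖x‖ ∂μ = (finrank ℝ E : ℝ≥0∞) * μ (ball 0 1) *
      ∫⁻ y in Ioi (0:ℝ), ENNReal.ofReal (y ^ (finrank ℝ E - 1)) * f y := by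
  have hmeas : Measurable (fun p : sphere (0:E) 1 × Ioi (0:ℝ) => f p.2) :=
    hf.comp (measurable_subtype_coe.comp measurable_snd)
  calc ∫⁻ x, f ‖x‖ ∂μ = ∫⁻ x : ({0}ᶜ : Set E), f ‖x.1‖ ∂(μ.comap (↑)) := by
        rw [lintegral_subtype_comap (measurableSet_singleton 0).compl (fun x => f ‖x‖),
          MeasureTheory.restrict_compl_singleton]
    _ = ∫⁻ p : sphere (0:E) 1 × Ioi (0:ℝ), f p.2
          ∂(μ.toSphere.prod (volumeIoiPow (finrank ℝ E - 1))) := by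
        rw [← μ.measurePreserving_homeomorphUnitSphereProd.lintegral_comp
          (f := fun p : sphere (0:E) 1 × Ioi (0:ℝ) => f p.2) hmeas]
        simp
    _ = μ.toSphere univ * ∫⁻ y : Ioi (0:ℝ), f y ∂(volumeIoiPow (finrank ℝ E - 1)) := by
        rw [lintegral_prod _ hmeas.aemeasurable]
        simp [lintegral_const, mul_comm]
    _ = _ := by
        rw [Measure.toSphere_apply_univ, Measure.volumeIoiPow,
          lintegral_withDensity_eq_lintegral_mul _
            (by fun_prop : Measurable (fun r : Ioi (0:ℝ) => ENNReal.ofReal (r.1 ^ (finrank ℝ E - 1))))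
            (g := fun y : Ioi (0:ℝ) => f y.1) (hf.comp measurable_subtype_coe)]
        simp only [Pi.mul_apply]
        rw [lintegral_subtype_comap measurableSet_Ioi
            (fun y => ENNReal.ofReal (y ^ (finrank ℝ E - 1)) * f y)]

lemma tail_pow_integral (d : ℕ) (hd : 0 < d) {R : ℝ} (hR : 0 < R) :
    ∫⁻ x : EuclideanSpace ℝ (Fin d) in {x | R < ‖x‖}, (ENNReal.ofReal (‖x‖ ^ (d+2)))⁻¹
      = (d : ℝ≥0∞) * volume (Metric.ball (0 : EuclideanSpace ℝ (Fin d)) 1) *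
        (ENNReal.ofReal ((R^2)⁻¹) * ENNReal.ofReal ((2:ℝ)⁻¹)) := by
  haveI : Nonempty (Fin d) := Fin.pos_iff_nonempty.mp hd
  haveI : Nontrivial (EuclideanSpace ℝ (Fin d)) := inferInstance
  set g : ℝ → ℝ≥0∞ := fun y => (ENNReal.ofReal (y ^ (d+2)))⁻¹ with hg
  have hgm : Measurable g := by fun_prop
  have hfm : Measurable ((Ioi R).indicator g) := hgm.indicator measurableSet_Ioi
  have h1 : ∫⁻ x : EuclideanSpace ℝ (Fin d) in {x | R < ‖x‖}, (ENNReal.ofReal (‖x‖ ^ (d+2)))⁻¹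
      = ∫⁻ x : EuclideanSpace ℝ (Fin d), (Ioi R).indicator g ‖x‖ := by
    rw [← lintegral_indicator (isOpen_lt continuous_const continuous_norm).measurableSet]
    exact lintegral_congr fun x => by simp [Set.indicator_apply, hg]
  rw [h1, lintegral_norm_addHaar volume ((Ioi R).indicator g) hfm]
  simp only [finrank_euclideanSpace_fin]
  congr 1
  have h2 : (fun y : ℝ => ENNReal.ofReal (y ^ (d-1)) * (Ioi R).indicator g y)
      = (Ioi R).indicator (fun y => ENNReal.ofReal (y ^ (d-1)) * g y) := by
    ext y
    by_cases h : y ∈ Ioi R <;> simp [Set.indicator_apply, h]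
  rw [h2, lintegral_indicator measurableSet_Ioi, Measure.restrict_restrict measurableSet_Ioi,
    inter_eq_left.mpr (Ioi_subset_Ioi hR.le)]
  have h3 : ∀ y ∈ Ioi R, ENNReal.ofReal (y ^ (d-1)) * g y = ENNReal.ofReal (y ^ (-3:ℝ)) := by
    intro y hy
    have hy0 : 0 < y := hR.trans hy
    have hpow : y ^ (d+2) = y ^ (d-1) * y ^ 3 := by
      rw [← pow_add]; congr 1; omega
    show ENNReal.ofReal (y ^ (d-1)) * (ENNReal.ofReal (y ^ (d+2)))⁻¹
        = ENNReal.ofReal (y ^ (-3:ℝ))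
    rw [← ENNReal.ofReal_inv_of_pos (by positivity), ← ENNReal.ofReal_mul (by positivity)]
    congr 1
    rw [hpow, Real.rpow_neg hy0.le, show (3:ℝ) = ((3:ℕ):ℝ) by norm_num, Real.rpow_natCast,
      mul_inv, ← mul_assoc, mul_inv_cancel₀ (by positivity), one_mul]
  rw [setLIntegral_congr_fun measurableSet_Ioi h3]
  have hint : IntegrableOn (fun y : ℝ => y ^ (-3:ℝ)) (Ioi R) :=
    integrableOn_Ioi_rpow_of_lt (by norm_num) hR
  rw [← ofReal_integral_eq_lintegral_ofReal hint
    ((ae_restrict_mem measurableSet_Ioi).mono fun y hy =>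
      Real.rpow_nonneg (hR.trans hy).le _)]
  rw [integral_Ioi_rpow_of_lt (by norm_num) hR]
  rw [← ENNReal.ofReal_mul (by positivity)]
  congr 1
  rw [show (-3:ℝ) + 1 = -2 by norm_num, Real.rpow_neg hR.le,
    show (2:ℝ) = ((2:ℕ):ℝ) by norm_num, Real.rpow_natCast]
  ring

lemma tail_pow_integral_Ici (d : ℕ) (hd : 0 < d) {R : ℝ} (hR : 0 < R) :
    ∫⁻ x : EuclideanSpace ℝ (Fin d) in {x | R ≤ ‖x‖}, (ENNReal.ofReal (‖x‖ ^ (d+2)))⁻¹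
      = (d : ℝ≥0∞) * volume (Metric.ball (0 : EuclideanSpace ℝ (Fin d)) 1) *
        (ENNReal.ofReal ((R^2)⁻¹) * ENNReal.ofReal ((2:ℝ)⁻¹)) := by
  haveI : Nonempty (Fin d) := Fin.pos_iff_nonempty.mp hd
  haveI : Nontrivial (EuclideanSpace ℝ (Fin d)) := inferInstance
  rw [← tail_pow_integral d hd hR]
  apply setLIntegral_congr
  refine MeasureTheory.ae_eq_set.mpr ⟨?_, ?_⟩
  · refine measure_mono_null (fun x hx => ?_)
      (Measure.addHaar_sphere volume (0 : EuclideanSpace ℝ (Fin d)) R)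
    have : ‖x‖ = R := le_antisymm (not_lt.mp hx.2) hx.1
    simpa [mem_sphere_iff_norm] using this
  · have : {x : EuclideanSpace ℝ (Fin d) | R < ‖x‖} \ {x | R ≤ ‖x‖} = ∅ := by
      ext x; simp only [mem_diff, mem_setOf_eq, mem_empty_iff_false, iff_false, not_and, not_not]
      exact fun h => h.le
    simp [this]

lemma omegaD_eq (d : ℕ) (hd : 0 < d) :
    (d : ℝ) * (Real.sqrt Real.pi ^ d / Real.Gamma ((d:ℝ) / 2 + 1)) = omegaD d := by
  have h1 : Real.sqrt Real.pi ^ d = Real.pi ^ ((d:ℝ)/2) := by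
    rw [Real.sqrt_eq_rpow, ← Real.rpow_natCast (Real.pi ^ (1/2 : ℝ)) d,
      ← Real.rpow_mul Real.pi_pos.le]
    ring_nf
  have h2 : Real.Gamma ((d:ℝ)/2 + 1) = ((d:ℝ)/2) * Real.Gamma ((d:ℝ)/2) := by
    rw [Real.Gamma_add_one (by positivity)]
  have h3 : 0 < Real.Gamma ((d:ℝ)/2) := Real.Gamma_pos_of_pos (by positivity)
  have hd' : (0:ℝ) < d := Nat.cast_pos.mpr hd
  rw [h1, h2, omegaD]
  field_simp

lemma Kfun_le_hfun (d : ℕ) (ν : ℝ → ℝ≥0∞) {r : ℝ} (hr : 0 < r) :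
    Kfun d ν r ≤ hfun d ν r := by
  rw [Kfun, hfun]
  rw [← lintegral_indicator (isOpen_lt continuous_norm continuous_const).measurableSet]
  rw [← lintegral_const_mul' _ _
    (ENNReal.inv_ne_top.mpr (ne_of_gt (ENNReal.ofReal_pos.mpr (pow_pos hr 2))))]
  refine lintegral_mono fun x => ?_
  rcases lt_or_ge ‖x‖ r with h | h
  · rw [Set.indicator_of_mem (by simpa using h)]
    rw [← mul_assoc]
    gcongr
    have : (ENNReal.ofReal (r ^ 2))⁻¹ * ENNReal.ofReal (‖x‖ ^ 2)
        = ENNReal.ofReal (‖x‖ ^ 2 / r ^ 2) := by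
      rw [ENNReal.ofReal_div_of_pos (by positivity), ENNReal.div_eq_inv_mul]
    rw [this]
    refine le_min ?_ le_rfl
    exact ENNReal.ofReal_le_one.mpr ((div_le_one (pow_pos hr 2)).mpr
      (pow_le_pow_left₀ (norm_nonneg x) h.le 2))
  · rw [Set.indicator_of_notMem (by simpa using not_lt.mpr h)]
    simp

lemma hfun_anti (d : ℕ) (ν : ℝ → ℝ≥0∞) {r₁ r₂ : ℝ} (h1 : 0 < r₁) (h12 : r₁ ≤ r₂) :
    hfun d ν r₂ ≤ hfun d ν r₁ := by
  refine lintegral_mono fun x => ?_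
  have : ENNReal.ofReal (‖x‖ ^ 2 / r₂ ^ 2) ≤ ENNReal.ofReal (‖x‖ ^ 2 / r₁ ^ 2) := by
    refine ENNReal.ofReal_le_ofReal ?_
    apply div_le_div_of_nonneg_left (by positivity) (pow_pos h1 2)
    exact pow_le_pow_left₀ h1.le h12 2
  exact mul_le_mul_left (min_le_min le_rfl this) _

lemma S_eq (d : ℕ) (hd : 0 < d) (ν : ℝ → ℝ≥0∞) (hν_meas : Measurable ν)
    {t r₀ : ℝ} (ht : 0 < t) (hr₀ : 0 < r₀)
    (hh : hfun d ν r₀ = ENNReal.ofReal (1 / t)) :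
    ∫⁻ x : EuclideanSpace ℝ (Fin d) in {x | r₀ ≤ ‖x‖},
        ENNReal.ofReal t * Kfun d ν ‖x‖ / ENNReal.ofReal (‖x‖ ^ d)
      = ENNReal.ofReal (omegaD d / 2) := by
  haveI : Nonempty (Fin d) := Fin.pos_iff_nonempty.mp hd
  set E := EuclideanSpace ℝ (Fin d)
  set g : E → ℝ≥0∞ := fun y => ENNReal.ofReal (‖y‖^2) * ν ‖y‖ with hgdef
  have hgm : Measurable g :=
    ((measurable_norm.pow_const 2).ennreal_ofReal).mul (hν_meas.comp measurable_norm)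
  set Φ : E × E → ℝ≥0∞ := fun p =>
    Set.indicator {p : E × E | r₀ ≤ ‖p.1‖ ∧ ‖p.2‖ < ‖p.1‖}
      (fun p => ENNReal.ofReal t * (ENNReal.ofReal (‖p.1‖^(d+2)))⁻¹ * g p.2) p with hΦdef
  have hsetm : MeasurableSet {p : E × E | r₀ ≤ ‖p.1‖ ∧ ‖p.2‖ < ‖p.1‖} := by
    refine MeasurableSet.inter ?_ ?_
    · exact (isClosed_le continuous_const (continuous_norm.comp continuous_fst)).measurableSet
    · exact (isOpen_lt (continuous_norm.comp continuous_snd)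
        (continuous_norm.comp continuous_fst)).measurableSet
  have hΦm : Measurable Φ := by
    refine Measurable.indicator ?_ hsetm
    exact (measurable_const.mul
      (((measurable_norm.comp measurable_fst).pow_const (d+2)).ennreal_ofReal.inv)).mul
      (hgm.comp measurable_snd)
  have hA : MeasurableSet {x : E | r₀ ≤ ‖x‖} :=
    (isClosed_le continuous_const continuous_norm).measurableSet
  set cD : ℝ≥0∞ := (d : ℝ≥0∞) * volume (Metric.ball (0 : E) 1) with hcD
  have hcD_ne_top : cD ≠ ⊤ :=
    ENNReal.mul_ne_top (ENNReal.natCast_ne_top d) measure_ball_lt_top.ne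
  -- claim 1
  have claim1 : ∀ x ∈ {x : E | r₀ ≤ ‖x‖},
      (∫⁻ y, Φ (x, y)) = ENNReal.ofReal t * Kfun d ν ‖x‖ / ENNReal.ofReal (‖x‖ ^ d) := by
    intro x hx
    have hx' : r₀ ≤ ‖x‖ := hx
    have hxpos : (0:ℝ) < ‖x‖ := hr₀.trans_le hx'
    have hrw : (fun y => Φ (x, y)) = Set.indicator {y : E | ‖y‖ < ‖x‖}
        (fun y => (ENNReal.ofReal t * (ENNReal.ofReal (‖x‖^(d+2)))⁻¹) * g y) := by
      funext y
      by_cases h : ‖y‖ < ‖x‖ <;> simp [hΦdef, Set.indicator_apply, hx', h]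
    have htop : ENNReal.ofReal t * (ENNReal.ofReal (‖x‖^(d+2)))⁻¹ ≠ ⊤ :=
      ENNReal.mul_ne_top ENNReal.ofReal_ne_top
        (ENNReal.inv_ne_top.mpr (ne_of_gt (ENNReal.ofReal_pos.mpr (by positivity))))
    rw [hrw, lintegral_indicator (isOpen_lt continuous_norm continuous_const).measurableSet,
      lintegral_const_mul' _ _ htop, Kfun, div_eq_mul_inv]
    have hsplit : (ENNReal.ofReal (‖x‖^(d+2)))⁻¹
        = (ENNReal.ofReal (‖x‖^2))⁻¹ * (ENNReal.ofReal (‖x‖^d))⁻¹ := by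
      rw [← ENNReal.mul_inv (Or.inl (ne_of_gt (ENNReal.ofReal_pos.mpr (by positivity))))
        (Or.inl ENNReal.ofReal_ne_top), ← ENNReal.ofReal_mul (by positivity), ← pow_add,
        Nat.add_comm 2 d]
    rw [hsplit]
    ring
  -- claim 2
  have claim2 : ∀ y : E, (∫⁻ x, Φ (x, y))
      = (ENNReal.ofReal t * cD * ENNReal.ofReal ((2:ℝ)⁻¹)) *
        (min 1 (ENNReal.ofReal (‖y‖^2 / r₀^2)) * ν ‖y‖) := by
    intro y
    set R := max r₀ ‖y‖ with hRdef
    have hRpos : 0 < R := lt_max_iff.mpr (Or.inl hr₀)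
    have hrw : (fun x : E => Φ (x, y)) = fun x => g y * (ENNReal.ofReal t *
        Set.indicator {x : E | r₀ ≤ ‖x‖ ∧ ‖y‖ < ‖x‖}
          (fun x => (ENNReal.ofReal (‖x‖^(d+2)))⁻¹) x) := by
      funext x
      simp only [hΦdef, Set.indicator_apply, Set.mem_setOf_eq]
      by_cases h : r₀ ≤ ‖x‖ ∧ ‖y‖ < ‖x‖
      · simp only [if_pos h]
        ring
      · simp [h]
    have hSy : MeasurableSet {x : E | r₀ ≤ ‖x‖ ∧ ‖y‖ < ‖x‖} :=
      (  (isClosed_le continuous_const continuous_norm).measurableSet.inter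
         (isOpen_lt continuous_const continuous_norm).measurableSet)
    have hindm : Measurable (Set.indicator {x : E | r₀ ≤ ‖x‖ ∧ ‖y‖ < ‖x‖}
        (fun x => (ENNReal.ofReal (‖x‖^(d+2)))⁻¹)) :=
      Measurable.indicator ((measurable_norm.pow_const (d+2)).ennreal_ofReal.inv) hSy
    rw [hrw, lintegral_const_mul _ (hindm.const_mul (ENNReal.ofReal t)),
      lintegral_const_mul _ hindm, lintegral_indicator hSy]
    have hval : ∫⁻ x : E in {x | r₀ ≤ ‖x‖ ∧ ‖y‖ < ‖x‖}, (ENNReal.ofReal (‖x‖^(d+2)))⁻¹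
        = cD * (ENNReal.ofReal ((R^2)⁻¹) * ENNReal.ofReal ((2:ℝ)⁻¹)) := by
      rcases lt_or_ge ‖y‖ r₀ with h | h
      · have hset : {x : E | r₀ ≤ ‖x‖ ∧ ‖y‖ < ‖x‖} = {x : E | r₀ ≤ ‖x‖} := by
          ext x
          exact ⟨fun hx => hx.1, fun hx => ⟨hx, h.trans_le hx⟩⟩
        rw [hset, hRdef, max_eq_left h.le]
        exact tail_pow_integral_Ici d hd hr₀
      · have hset : {x : E | r₀ ≤ ‖x‖ ∧ ‖y‖ < ‖x‖} = {x : E | ‖y‖ < ‖x‖} := by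
          ext x
          exact ⟨fun hx => hx.2, fun hx => ⟨h.trans hx.le, hx⟩⟩
        rw [hset, hRdef, max_eq_right h]
        exact tail_pow_integral d hd (hr₀.trans_le h)
    rw [hval]
    have hmin : ENNReal.ofReal (‖y‖^2) * ENNReal.ofReal ((R^2)⁻¹)
        = min 1 (ENNReal.ofReal (‖y‖^2 / r₀^2)) := by
      rcases le_or_gt ‖y‖ r₀ with h | h
      · rw [hRdef, max_eq_left h, ← ENNReal.ofReal_mul (by positivity), ← div_eq_mul_inv]
        refine (min_eq_right ?_).symm
        exact ENNReal.ofReal_le_one.mpr ((div_le_one (pow_pos hr₀ 2)).mpr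
          (pow_le_pow_left₀ (norm_nonneg y) h 2))
      · rw [hRdef, max_eq_right h.le, ← ENNReal.ofReal_mul (by positivity),
          mul_inv_cancel₀ (pow_pos (hr₀.trans h) 2).ne', ENNReal.ofReal_one]
        refine (min_eq_left ?_).symm
        exact ENNReal.one_le_ofReal.mpr ((one_le_div (pow_pos hr₀ 2)).mpr
          (pow_le_pow_left₀ hr₀.le h.le 2))
    rw [← hmin, hgdef]
    ring
  -- assemble
  have hconst_ne_top : ENNReal.ofReal t * cD * ENNReal.ofReal ((2:ℝ)⁻¹) ≠ ⊤ :=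
    ENNReal.mul_ne_top (ENNReal.mul_ne_top ENNReal.ofReal_ne_top hcD_ne_top)
      ENNReal.ofReal_ne_top
  calc ∫⁻ x : E in {x | r₀ ≤ ‖x‖},
        ENNReal.ofReal t * Kfun d ν ‖x‖ / ENNReal.ofReal (‖x‖ ^ d)
      = ∫⁻ x : E in {x | r₀ ≤ ‖x‖}, ∫⁻ y, Φ (x, y) :=
        setLIntegral_congr_fun hA (fun x hx => (claim1 x hx).symm)
    _ = ∫⁻ x : E, ∫⁻ y, Φ (x, y) := by
        have hz : ∀ x ∈ {x : E | r₀ ≤ ‖x‖}ᶜ, (∫⁻ y, Φ (x, y)) = (0 : ℝ≥0∞) := by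
          intro x hx
          have hx' : ¬ r₀ ≤ ‖x‖ := hx
          have : (fun y => Φ (x, y)) = fun _ => 0 := by
            funext y
            simp [hΦdef, Set.indicator_apply, hx']
          rw [this, lintegral_const, zero_mul]
        have hfull : ∫⁻ x : E, ∫⁻ y, Φ (x, y)
            = (∫⁻ x : E in {x | r₀ ≤ ‖x‖}, ∫⁻ y, Φ (x, y))
              + ∫⁻ x : E in {x | r₀ ≤ ‖x‖}ᶜ, ∫⁻ y, Φ (x, y) :=
          (lintegral_add_compl (fun x => ∫⁻ y, Φ (x, y)) hA).symm
        rw [hfull, setLIntegral_congr_fun hA.compl hz]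
        simp
    _ = ∫⁻ y : E, ∫⁻ x, Φ (x, y) := lintegral_lintegral_swap hΦm.aemeasurable
    _ = ∫⁻ y : E, (ENNReal.ofReal t * cD * ENNReal.ofReal ((2:ℝ)⁻¹)) *
          (min 1 (ENNReal.ofReal (‖y‖^2 / r₀^2)) * ν ‖y‖) := lintegral_congr claim2
    _ = (ENNReal.ofReal t * cD * ENNReal.ofReal ((2:ℝ)⁻¹)) * hfun d ν r₀ :=
        lintegral_const_mul' _ _ hconst_ne_top
    _ = ENNReal.ofReal (omegaD d / 2) := by
        rw [hh]
        have hvol : volume (Metric.ball (0 : E) 1)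
            = ENNReal.ofReal (Real.sqrt Real.pi ^ d / Real.Gamma ((d:ℝ)/2 + 1)) := by
          rw [show (volume (Metric.ball (0 : E) 1)) = volume (Metric.ball (0 : EuclideanSpace ℝ (Fin d)) 1) from rfl,
            EuclideanSpace.volume_ball]
          simp [Fintype.card_fin]
        have h5 : ENNReal.ofReal t * ENNReal.ofReal (1/t) = 1 := by
          rw [← ENNReal.ofReal_mul ht.le, mul_one_div_cancel ht.ne', ENNReal.ofReal_one]
        calc ENNReal.ofReal t * cD * ENNReal.ofReal ((2:ℝ)⁻¹) * ENNReal.ofReal (1/t)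
            = (ENNReal.ofReal t * ENNReal.ofReal (1/t)) *
              (cD * ENNReal.ofReal ((2:ℝ)⁻¹)) := by ring
          _ = cD * ENNReal.ofReal ((2:ℝ)⁻¹) := by rw [h5, one_mul]
          _ = ENNReal.ofReal (omegaD d / 2) := by
              rw [hcD, hvol, ← ENNReal.ofReal_natCast d, ← ENNReal.ofReal_mul (by positivity),
                ← ENNReal.ofReal_mul (by positivity), omegaD_eq d hd, div_eq_mul_inv]

theorem stmt9 (d : ℕ) (hd : 0 < d) (ν : ℝ → ℝ≥0∞)
    (hν_meas : Measurable ν) (hν_mono : AntitoneOn ν (Set.Ici 0))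
    (hν_int : (∫⁻ x : EuclideanSpace ℝ (Fin d),
      min 1 (ENNReal.ofReal (‖x‖ ^ 2)) * ν ‖x‖) ≠ ⊤)
    (hinv : ℝ → ℝ) (hinv_pos : ∀ u : ℝ, 0 < u → 0 < hinv u)
    (hinv_eq : ∀ u : ℝ, 0 < u → hfun d ν (hinv u) = ENNReal.ofReal u)
 :
    ∀ t : ℝ, 0 < t →
      ENNReal.ofReal (omegaD d / 2) ≤ (∫⁻ x, rho d ν hinv t x) ∧
      (∫⁻ x, rho d ν hinv t x)
        ≤ ENNReal.ofReal (omegaD d / 2 * (1 + 2 / (d : ℝ))) := by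
  intro t ht
  haveI : Nonempty (Fin d) := Fin.pos_iff_nonempty.mp hd
  have h1t : (0:ℝ) < 1 / t := by positivity
  set r₀ := hinv (1 / t) with hr₀def
  have hr₀ : 0 < r₀ := hinv_pos _ h1t
  have hh : hfun d ν r₀ = ENNReal.ofReal (1 / t) := hinv_eq _ h1t
  have hA : MeasurableSet {x : EuclideanSpace ℝ (Fin d) | r₀ ≤ ‖x‖} :=
    (isClosed_le continuous_const continuous_norm).measurableSet
  have hB : ∀ x : EuclideanSpace ℝ (Fin d), r₀ ≤ ‖x‖ →
      ENNReal.ofReal t * Kfun d ν ‖x‖ / ENNReal.ofReal (‖x‖ ^ d)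
        ≤ ENNReal.ofReal ((r₀ ^ d)⁻¹) := by
    intro x hx
    have hxpos : 0 < ‖x‖ := hr₀.trans_le hx
    have h1 : Kfun d ν ‖x‖ ≤ ENNReal.ofReal (1/t) := by
      calc Kfun d ν ‖x‖ ≤ hfun d ν ‖x‖ := Kfun_le_hfun d ν hxpos
        _ ≤ hfun d ν r₀ := hfun_anti d ν hr₀ hx
        _ = ENNReal.ofReal (1/t) := hh
    have h2 : ENNReal.ofReal t * Kfun d ν ‖x‖ ≤ 1 := by
      calc ENNReal.ofReal t * Kfun d ν ‖x‖ ≤ ENNReal.ofReal t * ENNReal.ofReal (1/t) :=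
          mul_le_mul_right h1 _
        _ = 1 := by rw [← ENNReal.ofReal_mul ht.le, mul_one_div_cancel ht.ne',
            ENNReal.ofReal_one]
    calc ENNReal.ofReal t * Kfun d ν ‖x‖ / ENNReal.ofReal (‖x‖ ^ d)
        ≤ 1 / ENNReal.ofReal (r₀ ^ d) :=
          ENNReal.div_le_div h2 (ENNReal.ofReal_le_ofReal (pow_le_pow_left₀ hr₀.le hx d))
      _ = ENNReal.ofReal ((r₀ ^ d)⁻¹) := by
          rw [one_div, ENNReal.ofReal_inv_of_pos (pow_pos hr₀ d)]
  have hrho : ∀ x : EuclideanSpace ℝ (Fin d), r₀ ≤ ‖x‖ →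
      rho d ν hinv t x = ENNReal.ofReal t * Kfun d ν ‖x‖ / ENNReal.ofReal (‖x‖ ^ d) := by
    intro x hx
    unfold rho
    rw [← hr₀def]
    exact min_eq_right (hB x hx)
  have hS := S_eq d hd ν hν_meas ht hr₀ hh
  have hAeq : ∫⁻ x in {x : EuclideanSpace ℝ (Fin d) | r₀ ≤ ‖x‖}, rho d ν hinv t x
      = ENNReal.ofReal (omegaD d / 2) := by
    rw [setLIntegral_congr_fun hA (fun x hx => hrho x hx)]
    exact hS
  have hΓ : (0:ℝ) < Real.Gamma ((d:ℝ)/2 + 1) := Real.Gamma_pos_of_pos (by positivity)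
  set V₁ : ℝ := Real.sqrt Real.pi ^ d / Real.Gamma ((d:ℝ)/2 + 1) with hV₁
  have hV₁nn : 0 ≤ V₁ := div_nonneg (by positivity) hΓ.le
  have hω : (d:ℝ) * V₁ = omegaD d := omegaD_eq d hd
  have hωnn : 0 ≤ omegaD d := by
    rw [← hω]; positivity
  constructor
  · calc ENNReal.ofReal (omegaD d / 2)
        = ∫⁻ x in {x : EuclideanSpace ℝ (Fin d) | r₀ ≤ ‖x‖}, rho d ν hinv t x := hAeq.symm
      _ ≤ ∫⁻ x, rho d ν hinv t x := setLIntegral_le_lintegral _ _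
  · have hcompl : {x : EuclideanSpace ℝ (Fin d) | r₀ ≤ ‖x‖}ᶜ
        = Metric.ball (0 : EuclideanSpace ℝ (Fin d)) r₀ := by
      ext x
      simp [not_le, mem_ball_zero_iff]
    have h2 : ∫⁻ x in {x : EuclideanSpace ℝ (Fin d) | r₀ ≤ ‖x‖}ᶜ, rho d ν hinv t x
        ≤ ENNReal.ofReal V₁ := by
      calc ∫⁻ x in {x : EuclideanSpace ℝ (Fin d) | r₀ ≤ ‖x‖}ᶜ, rho d ν hinv t x
          ≤ ∫⁻ _ in {x : EuclideanSpace ℝ (Fin d) | r₀ ≤ ‖x‖}ᶜ,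
              ENNReal.ofReal ((r₀ ^ d)⁻¹) := by
            refine lintegral_mono fun x => ?_
            unfold rho
            rw [← hr₀def]
            exact min_le_left _ _
        _ = ENNReal.ofReal ((r₀ ^ d)⁻¹) *
              volume ({x : EuclideanSpace ℝ (Fin d) | r₀ ≤ ‖x‖}ᶜ) := setLIntegral_const _ _
        _ = ENNReal.ofReal V₁ := by
            rw [hcompl, EuclideanSpace.volume_ball]
            simp only [Fintype.card_fin]
            rw [← ENNReal.ofReal_pow hr₀.le, ← mul_assoc,
              ← ENNReal.ofReal_mul (by positivity), inv_mul_cancel₀ (pow_pos hr₀ d).ne',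
              ENNReal.ofReal_one, one_mul]
    calc ∫⁻ x, rho d ν hinv t x
        = (∫⁻ x in {x : EuclideanSpace ℝ (Fin d) | r₀ ≤ ‖x‖}, rho d ν hinv t x)
          + ∫⁻ x in {x : EuclideanSpace ℝ (Fin d) | r₀ ≤ ‖x‖}ᶜ, rho d ν hinv t x :=
          (lintegral_add_compl _ hA).symm
      _ ≤ ENNReal.ofReal (omegaD d / 2) + ENNReal.ofReal V₁ := by
          rw [hAeq]
          exact add_le_add_right h2 _
      _ = ENNReal.ofReal (omegaD d / 2 * (1 + 2 / (d : ℝ))) := by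
          rw [← ENNReal.ofReal_add (by positivity) hV₁nn]
          congr 1
          have hd' : (0:ℝ) < d := Nat.cast_pos.mpr hd
          have : V₁ = omegaD d / d := by
            rw [← hω]; field_simp
          rw [this]
          field_simp
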